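/- Closed form of variance-difference expansion for misspecified outcome regressions: E[Ψ₃²|X] - E[Ψ₁²|X] = ((1-p(X))/p(X))·(m̃₁(X)-m₁(X))² + (p(X)/(1-p(X)))·(m̃₀(X)-m₀(X))² + 2(m̃₁(X)-m₁(X))(m̃₀(X)-m₀(X)). -/

import Mathlib

/-!
Write `Ψ₃ = Ψ₁ - c·(D - p)` with the `X`-measurable coefficient
`c = (m̃₁ - m₁)/p + (m̃₀ - m₀)/(1 - p)`. Since `D² = D`, the product `(D - p)·Ψ₁` is a
combination, with `X`-measurable coefficients, of `D(Y - m₁)`, `(1 - D)(Y - m₀)` and `D - p`,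
which all have conditional mean zero. So `D - p` is conditionally orthogonal to `Ψ₁`, and
`E[Ψ₃²|X] - E[Ψ₁²|X] = c²·E[(D - p)²|X] = c²·p(1 - p)`, which expands to the closed form.
-/

open MeasureTheory ProbabilityTheory
open scoped ENNReal

section

variable {Ω : Type*} {m mΩ : MeasurableSpace Ω} {μ : Measure Ω}

lemma condExp_mul_eq_zero {f g : Ω → ℝ} (hf : AEStronglyMeasurable[m] f μ)
    (hfg : Integrable (f * g) μ) (hg : Integrable g μ) (hg0 : μ[g|m] =ᵐ[μ] 0) :
    μ[f * g|m] =ᵐ[μ] 0 := by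
  filter_upwards [condExp_mul_of_aestronglyMeasurable_left hf hfg hg, hg0] with ω h h0
  simp [h, h0]

lemma condExp_sub_mul_eq_zero {f g w q : Ω → ℝ} (hf : AEStronglyMeasurable[m] f μ)
    (hg : Integrable g μ) (hw : Integrable w μ) (hfw : Integrable (f * w) μ)
    (hgq : μ[g|m] =ᵐ[μ] q * f) (hwq : μ[w|m] =ᵐ[μ] q) :
    μ[g - f * w|m] =ᵐ[μ] 0 := by
  filter_upwards [condExp_sub hg hfw m, hgq, condExp_mul_of_aestronglyMeasurable_left hf hfw hw,
    hwq] with ω h₁ h₂ h₃ h₄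
  simp [h₁, h₂, h₃, h₄, mul_comm]

lemma condExp_sub_mul_sq [IsFiniteMeasure μ] {ψ V c : Ω → ℝ} (hψ : MemLp ψ 2 μ)
    (hV : MemLp V ∞ μ) (hc : MemLp c 2 μ) (hcm : AEStronglyMeasurable[m] c μ)
    (horth : μ[V * ψ|m] =ᵐ[μ] 0) :
    μ[(ψ - c * V) ^ 2|m] =ᵐ[μ] μ[ψ ^ 2|m] + c ^ 2 * μ[V ^ 2|m] := by
  have hVψ : MemLp (V * ψ) 2 μ := hψ.mul hV
  have hV2 : MemLp (V ^ 2) ∞ μ := by simpa only [sq] using hV.mul hV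
  have hc2 : MemLp (c ^ 2) 1 μ := memLp_one_iff_integrable.2 hc.integrable_sq
  have hψ2 : Integrable (ψ ^ 2) μ := hψ.integrable_sq
  have h2c : AEStronglyMeasurable[m] (2 * c) μ := hcm.const_mul 2
  have hcross : Integrable (2 * c * (V * ψ)) μ := (hc.const_mul 2).integrable_mul hVψ
  have hquad : Integrable (c ^ 2 * V ^ 2) μ := memLp_one_iff_integrable.1 (hV2.mul hc2)
  have expand : (ψ - c * V) ^ 2 = ψ ^ 2 - 2 * c * (V * ψ) + c ^ 2 * V ^ 2 := by ring
  rw [expand]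
  filter_upwards [condExp_add (hψ2.sub hcross) hquad m, condExp_sub hψ2 hcross m,
    condExp_mul_eq_zero h2c hcross (hVψ.integrable one_le_two) horth,
    condExp_mul_of_aestronglyMeasurable_left (hcm.pow 2) hquad (hV2.integrable le_top)]
    with ω h₁ h₂ h₃ h₄
  rw [h₁, Pi.add_apply, h₂, Pi.sub_apply, h₃, h₄]
  simp

lemma condExp_sub_eq_zero_of_ae_eq_condExp (hm : m ≤ mΩ) [SigmaFinite (μ.trim hm)]
    {D p : Ω → ℝ} (hD : Integrable D μ) (hpD : p =ᵐ[μ] μ[D|m]) : μ[D - p|m] =ᵐ[μ] 0 := by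
  have hpm : AEStronglyMeasurable[m] p μ :=
    stronglyMeasurable_condExp.aestronglyMeasurable.congr hpD.symm
  have hp : Integrable p μ := integrable_condExp.congr hpD.symm
  filter_upwards [condExp_sub hD hp m, condExp_of_aestronglyMeasurable' hm hpm hp, hpD]
    with ω h₁ h₂ h₃
  simp [h₁, h₂, h₃]

lemma memLp_top_inv_of_le {f : Ω → ℝ} {ε : ℝ} (hf : AEStronglyMeasurable f μ) (hε : 0 < ε)
    (hfε : ∀ᵐ ω ∂μ, ε ≤ f ω) : MemLp f⁻¹ ∞ μ := by
  refine memLp_top_of_bound hf.inv₀ ε⁻¹ ?_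
  filter_upwards [hfε] with ω h
  rw [Pi.inv_apply, norm_inv, Real.norm_of_nonneg (hε.le.trans h)]
  exact inv_anti₀ hε h

lemma memLp_top_of_mem_zero_one {D : Ω → ℝ} (hD : AEStronglyMeasurable D μ)
    (hD01 : ∀ ω, D ω = 0 ∨ D ω = 1) : MemLp D ∞ μ :=
  memLp_top_of_bound hD 1 (.of_forall fun ω => by rcases hD01 ω with h | h <;> simp [h])

lemma memLp_two_of_condExp_eq_mul {f g q : Ω → ℝ} {ε : ℝ} (hg : MemLp g 2 μ)
    (hf : AEStronglyMeasurable f μ) (hε : 0 < ε) (hqε : ∀ᵐ ω ∂μ, ε ≤ q ω)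
    (hgq : μ[g|m] =ᵐ[μ] q * f) : MemLp f 2 μ := by
  refine (hg.condExp (m := m) one_le_two).of_le_mul (c := ε⁻¹) hf ?_
  filter_upwards [hqε, hgq] with ω hq h
  rw [h, Pi.mul_apply, norm_mul, Real.norm_of_nonneg (hε.le.trans hq), inv_mul_eq_div,
    le_div_iff₀ hε]
  exact (mul_comm _ _).trans_le (mul_le_mul_of_nonneg_right hq (norm_nonneg (f ω)))

end

-- `Ψ₁ = aipwScore D Y p m₁ m₀` and `Ψ₃ = aipwScore D Y p m̃₁ m̃₀`.
noncomputable def aipwScore {Ω : Type*} (D Y p t₁ t₀ : Ω → ℝ) : Ω → ℝ :=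
  fun ω => D ω * (Y ω - t₁ ω) / p ω - (1 - D ω) * (Y ω - t₀ ω) / (1 - p ω) + t₁ ω - t₀ ω

section

variable {Ω : Type*} {D Y p t₁ t₀ m₁ m₀ : Ω → ℝ}

lemma aipwScore_eq_sub_mul (hp : ∀ ω, p ω ≠ 0) (hq : ∀ ω, 1 - p ω ≠ 0) :
    aipwScore D Y p t₁ t₀
      = aipwScore D Y p m₁ m₀ - (p⁻¹ * (t₁ - m₁) + (1 - p)⁻¹ * (t₀ - m₀)) * (D - p) := by
  funext ω
  have := hp ω
  have := hq ω
  simp only [aipwScore, Pi.sub_apply, Pi.add_apply, Pi.mul_apply, Pi.inv_apply, Pi.one_apply]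
  field_simp
  ring

lemma sub_mul_aipwScore (hD01 : ∀ ω, D ω = 0 ∨ D ω = 1) (hp : ∀ ω, p ω ≠ 0)
    (hq : ∀ ω, 1 - p ω ≠ 0) :
    (D - p) * aipwScore D Y p m₁ m₀
      = (p⁻¹ - 1) * (D * Y - m₁ * D) + ((1 - p)⁻¹ - 1) * ((1 - D) * Y - m₀ * (1 - D))
        + (m₁ - m₀) * (D - p) := by
  funext ω
  have := hp ω
  have := hq ω
  simp only [aipwScore, Pi.sub_apply, Pi.add_apply, Pi.mul_apply, Pi.inv_apply, Pi.one_apply]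
  rcases hD01 ω with h | h <;> rw [h] <;> field_simp <;> ring

lemma sub_sq_of_mem_zero_one (hD01 : ∀ ω, D ω = 0 ∨ D ω = 1) :
    (D - p) ^ 2 = (1 - 2 * p) * (D - p) + p * (1 - p) := by
  funext ω
  simp only [Pi.sub_apply, Pi.add_apply, Pi.mul_apply, Pi.pow_apply, Pi.ofNat_apply]
  rcases hD01 ω with h | h <;> rw [h] <;> ring

variable {m mΩ : MeasurableSpace Ω} {μ : Measure Ω} [IsFiniteMeasure μ]

lemma condExp_sub_sq_eq_mul_one_sub (hm : m ≤ mΩ) (hD01 : ∀ ω, D ω = 0 ∨ D ω = 1)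
    (hD : MemLp D ∞ μ) (hpD : p =ᵐ[μ] μ[D|m]) : μ[(D - p) ^ 2|m] =ᵐ[μ] p * (1 - p) := by
  have hpm : AEStronglyMeasurable[m] p μ :=
    stronglyMeasurable_condExp.aestronglyMeasurable.congr hpD.symm
  have hp : MemLp p ∞ μ := (hD.condExp le_top).ae_eq hpD.symm
  have hV : MemLp (D - p) ∞ μ := hD.sub hp
  have hcoef : MemLp (1 - 2 * p) ∞ μ := (memLp_const 1).sub (hp.const_mul 2)
  have hlin : Integrable ((1 - 2 * p) * (D - p)) μ := (hV.mul hcoef).integrable le_top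
  have hvar : Integrable (p * (1 - p)) μ := (((memLp_const 1).sub hp).mul hp).integrable le_top
  have hcoefm : AEStronglyMeasurable[m] (1 - 2 * p) μ :=
    aestronglyMeasurable_one.sub (hpm.const_mul 2)
  have hvarm : AEStronglyMeasurable[m] (p * (1 - p)) μ :=
    hpm.mul (aestronglyMeasurable_one.sub hpm)
  rw [sub_sq_of_mem_zero_one hD01]
  filter_upwards [condExp_add hlin hvar m, condExp_mul_eq_zero hcoefm hlin (hV.integrable le_top)
      (condExp_sub_eq_zero_of_ae_eq_condExp hm (hD.integrable le_top) hpD),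
    condExp_of_aestronglyMeasurable' hm hvarm hvar] with ω h₁ h₂ h₃
  rw [h₁, Pi.add_apply, h₂, h₃]
  simp

lemma condExp_sub_mul_aipwScore_eq_zero (hm : m ≤ mΩ) (hD01 : ∀ ω, D ω = 0 ∨ D ω = 1)
    (hD : MemLp D ∞ μ) (hpD : p =ᵐ[μ] μ[D|m]) (hp : ∀ ω, p ω ≠ 0) (hq : ∀ ω, 1 - p ω ≠ 0)
    (hpinv : MemLp p⁻¹ ∞ μ) (hqinv : MemLp (1 - p)⁻¹ ∞ μ) (hY : MemLp Y 2 μ)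
    (hm₁ : MemLp m₁ 2 μ) (hm₀ : MemLp m₀ 2 μ)
    (hm₁m : AEStronglyMeasurable[m] m₁ μ) (hm₀m : AEStronglyMeasurable[m] m₀ μ)
    (hDY : μ[D * Y|m] =ᵐ[μ] p * m₁) (hDY₀ : μ[(1 - D) * Y|m] =ᵐ[μ] (1 - p) * m₀) :
    μ[(D - p) * aipwScore D Y p m₁ m₀|m] =ᵐ[μ] 0 := by
  have hpm : AEStronglyMeasurable[m] p μ :=
    stronglyMeasurable_condExp.aestronglyMeasurable.congr hpD.symm
  have hD₀ : MemLp (1 - D) ∞ μ := (memLp_const 1).sub hD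
  have hD₀p : μ[1 - D|m] =ᵐ[μ] 1 - p := by
    have h1 : Integrable (1 : Ω → ℝ) μ := integrable_const 1
    filter_upwards [condExp_sub h1 (hD.integrable le_top) m, hpD] with ω h h'
    have hc1 : μ[(1 : Ω → ℝ)|m] = 1 := condExp_const hm 1
    rw [h, Pi.sub_apply, hc1, Pi.sub_apply, h']
  have hR₁ : MemLp (D * Y - m₁ * D) 2 μ := (hY.mul hD).sub (hD.mul hm₁)
  have hR₀ : MemLp ((1 - D) * Y - m₀ * (1 - D)) 2 μ := (hY.mul hD₀).sub (hD₀.mul hm₀)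
  have hV : MemLp (D - p) ∞ μ := hD.sub ((hD.condExp le_top).ae_eq hpD.symm)
  have hR₁0 : μ[D * Y - m₁ * D|m] =ᵐ[μ] 0 :=
    condExp_sub_mul_eq_zero hm₁m ((hY.mul hD).integrable one_le_two) (hD.integrable le_top)
      ((hD.mul hm₁).integrable one_le_two) hDY hpD.symm
  have hR₀0 : μ[(1 - D) * Y - m₀ * (1 - D)|m] =ᵐ[μ] 0 :=
    condExp_sub_mul_eq_zero hm₀m ((hY.mul hD₀).integrable one_le_two) (hD₀.integrable le_top)
      ((hD₀.mul hm₀).integrable one_le_two) hDY₀ hD₀p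
  have hV0 : μ[D - p|m] =ᵐ[μ] 0 :=
    condExp_sub_eq_zero_of_ae_eq_condExp hm (hD.integrable le_top) hpD
  have hc₁ : AEStronglyMeasurable[m] (p⁻¹ - 1) μ := hpm.inv₀.sub aestronglyMeasurable_one
  have hc₀ : AEStronglyMeasurable[m] ((1 - p)⁻¹ - 1) μ :=
    (aestronglyMeasurable_one.sub hpm).inv₀.sub aestronglyMeasurable_one
  have hT₁ : Integrable ((p⁻¹ - 1) * (D * Y - m₁ * D)) μ :=
    (hR₁.mul (hpinv.sub (memLp_const 1))).integrable one_le_two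
  have hT₀ : Integrable (((1 - p)⁻¹ - 1) * ((1 - D) * Y - m₀ * (1 - D))) μ :=
    (hR₀.mul (hqinv.sub (memLp_const 1))).integrable one_le_two
  have hT : Integrable ((m₁ - m₀) * (D - p)) μ := (hV.mul (hm₁.sub hm₀)).integrable one_le_two
  rw [sub_mul_aipwScore hD01 hp hq]
  filter_upwards [condExp_add (hT₁.add hT₀) hT m, condExp_add hT₁ hT₀ m,
    condExp_mul_eq_zero hc₁ hT₁ (hR₁.integrable one_le_two) hR₁0,
    condExp_mul_eq_zero hc₀ hT₀ (hR₀.integrable one_le_two) hR₀0,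
    condExp_mul_eq_zero (hm₁m.sub hm₀m) hT (hV.integrable le_top) hV0] with ω h₁ h₂ h₃ h₄ h₅
  rw [h₁, Pi.add_apply, h₂, Pi.add_apply, h₃, h₄, h₅]
  simp

lemma memLp_aipwScore (hD : MemLp D ∞ μ) (hpinv : MemLp p⁻¹ ∞ μ) (hqinv : MemLp (1 - p)⁻¹ ∞ μ)
    (hY : MemLp Y 2 μ) (ht₁ : MemLp t₁ 2 μ) (ht₀ : MemLp t₀ 2 μ) :
    MemLp (aipwScore D Y p t₁ t₀) 2 μ := by
  have hscore : aipwScore D Y p t₁ t₀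
      = D * p⁻¹ * (Y - t₁) - (1 - D) * (1 - p)⁻¹ * (Y - t₀) + t₁ - t₀ := by
    funext ω
    simp only [aipwScore, Pi.sub_apply, Pi.add_apply, Pi.mul_apply, Pi.inv_apply, Pi.one_apply]
    ring
  rw [hscore]
  have hw₁ : MemLp (D * p⁻¹) ∞ μ := hpinv.mul hD
  have hw₀ : MemLp ((1 - D) * (1 - p)⁻¹) ∞ μ := hqinv.mul ((memLp_const 1).sub hD)
  exact ((((hY.sub ht₁).mul hw₁).sub ((hY.sub ht₀).mul hw₀)).add ht₁).sub ht₀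

lemma condExp_aipwScore_sq_sub_aipwScore_sq {ε : ℝ} (hm : m ≤ mΩ)
    (hD : AEStronglyMeasurable D μ) (hD01 : ∀ ω, D ω = 0 ∨ D ω = 1) (hpD : p =ᵐ[μ] μ[D|m])
    (hε : 0 < ε) (hpb : ∀ ω, ε ≤ p ω ∧ p ω ≤ 1 - ε) (hY : MemLp Y 2 μ)
    (hm₁m : AEStronglyMeasurable[m] m₁ μ) (hm₀m : AEStronglyMeasurable[m] m₀ μ)
    (hDY : μ[D * Y|m] =ᵐ[μ] p * m₁) (hDY₀ : μ[(1 - D) * Y|m] =ᵐ[μ] (1 - p) * m₀)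
    (ht₁ : MemLp t₁ 2 μ) (ht₀ : MemLp t₀ 2 μ)
    (ht₁m : AEStronglyMeasurable[m] t₁ μ) (ht₀m : AEStronglyMeasurable[m] t₀ μ) :
    (fun ω => μ[aipwScore D Y p t₁ t₀ ^ 2|m] ω - μ[aipwScore D Y p m₁ m₀ ^ 2|m] ω)
      =ᵐ[μ] fun ω => (1 - p ω) / p ω * (t₁ ω - m₁ ω) ^ 2
        + p ω / (1 - p ω) * (t₀ ω - m₀ ω) ^ 2 + 2 * (t₁ ω - m₁ ω) * (t₀ ω - m₀ ω) := by
  have hp : ∀ ω, p ω ≠ 0 := fun ω => (hε.trans_le (hpb ω).1).ne'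
  have hqε : ∀ ω, ε ≤ 1 - p ω := fun ω => by linarith [(hpb ω).2]
  have hq : ∀ ω, 1 - p ω ≠ 0 := fun ω => (hε.trans_le (hqε ω)).ne'
  have hpm : AEStronglyMeasurable[m] p μ :=
    stronglyMeasurable_condExp.aestronglyMeasurable.congr hpD.symm
  have hqm : AEStronglyMeasurable[m] (1 - p) μ := aestronglyMeasurable_one.sub hpm
  have hpinv : MemLp p⁻¹ ∞ μ :=
    memLp_top_inv_of_le (hpm.mono hm) hε (.of_forall fun ω => (hpb ω).1)
  have hqinv : MemLp (1 - p)⁻¹ ∞ μ := memLp_top_inv_of_le (hqm.mono hm) hε (.of_forall hqε)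
  have hDtop : MemLp D ∞ μ := memLp_top_of_mem_zero_one hD hD01
  have hm₁ : MemLp m₁ 2 μ := memLp_two_of_condExp_eq_mul (hY.mul hDtop) (hm₁m.mono hm) hε
    (.of_forall fun ω => (hpb ω).1) hDY
  have hm₀ : MemLp m₀ 2 μ := memLp_two_of_condExp_eq_mul (hY.mul ((memLp_const 1).sub hDtop))
    (hm₀m.mono hm) hε (.of_forall hqε) hDY₀
  have hc : MemLp (p⁻¹ * (t₁ - m₁) + (1 - p)⁻¹ * (t₀ - m₀)) 2 μ :=
    ((ht₁.sub hm₁).mul hpinv).add ((ht₀.sub hm₀).mul hqinv)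
  have hcm : AEStronglyMeasurable[m] (p⁻¹ * (t₁ - m₁) + (1 - p)⁻¹ * (t₀ - m₀)) μ :=
    (hpm.inv₀.mul (ht₁m.sub hm₁m)).add (hqm.inv₀.mul (ht₀m.sub hm₀m))
  have hV : MemLp (D - p) ∞ μ := hDtop.sub ((hDtop.condExp le_top).ae_eq hpD.symm)
  rw [aipwScore_eq_sub_mul hp hq (m₁ := m₁) (m₀ := m₀)]
  filter_upwards [condExp_sub_mul_sq (memLp_aipwScore hDtop hpinv hqinv hY hm₁ hm₀) hV hc hcm
      (condExp_sub_mul_aipwScore_eq_zero hm hD01 hDtop hpD hp hq hpinv hqinv hY hm₁ hm₀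
        hm₁m hm₀m hDY hDY₀),
    condExp_sub_sq_eq_mul_one_sub hm hD01 hDtop hpD] with ω h₁ h₂
  rw [h₁, Pi.add_apply, Pi.mul_apply, h₂]
  have := hp ω
  have := hq ω
  simp only [Pi.add_apply, Pi.mul_apply, Pi.pow_apply, Pi.inv_apply, Pi.sub_apply, Pi.one_apply]
  field_simp
  ring

end

theorem variance_difference_closed_form_general
    {Ω E : Type*} [MeasurableSpace Ω]
    [mE : MeasurableSpace E]
    (μ : Measure Ω) [IsProbabilityMeasure μ]
    (X : Ω → E) (hX : Measurable X)
    (D Y1 Y0 Y : Ω → ℝ)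
    (hD : Measurable D) (hD01 : ∀ ω, D ω = 0 ∨ D ω = 1)
    (hY1 : MemLp Y1 2 μ) (hY0 : MemLp Y0 2 μ)
    (hY : ∀ ω, Y ω = D ω * Y1 ω + (1 - D ω) * Y0 ω)
    (pX : Ω → ℝ)
    (hpX : pX =ᵐ[μ] μ[D | MeasurableSpace.comap X mE])
    (ε : ℝ) (hε : 0 < ε) (hpb : ∀ ω, ε ≤ pX ω ∧ pX ω ≤ 1 - ε)
    (m1 m0 : Ω → ℝ)
    (hm1meas : StronglyMeasurable[MeasurableSpace.comap X mE] m1)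
    (hm0meas : StronglyMeasurable[MeasurableSpace.comap X mE] m0)
    (hm1 : μ[fun ω => D ω * Y ω | MeasurableSpace.comap X mE]
      =ᵐ[μ] fun ω => pX ω * m1 ω)
    (hm0 : μ[fun ω => (1 - D ω) * Y ω | MeasurableSpace.comap X mE]
      =ᵐ[μ] fun ω => (1 - pX ω) * m0 ω)
    (mtilde1 mtilde0 : E → ℝ)
    (hmt1 : Measurable mtilde1) (hmt0 : Measurable mtilde0)
    (hmt1sq : MemLp (fun ω => mtilde1 (X ω)) 2 μ)
    (hmt0sq : MemLp (fun ω => mtilde0 (X ω)) 2 μ) :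
    (fun ω =>
        (μ[fun ω' => (D ω' * (Y ω' - mtilde1 (X ω')) / pX ω'
              - (1 - D ω') * (Y ω' - mtilde0 (X ω')) / (1 - pX ω')
              + mtilde1 (X ω') - mtilde0 (X ω')) ^ 2 | MeasurableSpace.comap X mE]) ω
        - (μ[fun ω' => (D ω' * (Y ω' - m1 ω') / pX ω'
              - (1 - D ω') * (Y ω' - m0 ω') / (1 - pX ω')
              + m1 ω' - m0 ω') ^ 2 | MeasurableSpace.comap X mE]) ω)
      =ᵐ[μ] fun ω =>
        ((1 - pX ω) / pX ω) * (mtilde1 (X ω) - m1 ω) ^ 2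
          + (pX ω / (1 - pX ω)) * (mtilde0 (X ω) - m0 ω) ^ 2
          + 2 * (mtilde1 (X ω) - m1 ω) * (mtilde0 (X ω) - m0 ω) := by
  have hXm : Measurable[MeasurableSpace.comap X mE] X := comap_measurable X
  have hDtop : MemLp D ∞ μ := memLp_top_of_mem_zero_one hD.aestronglyMeasurable hD01
  have hYL2 : MemLp Y 2 μ := by
    rw [show Y = D * Y1 + (1 - D) * Y0 from funext hY]
    exact (hY1.mul hDtop).add (hY0.mul ((memLp_const 1).sub hDtop))
  exact condExp_aipwScore_sq_sub_aipwScore_sq hX.comap_le hD.aestronglyMeasurable hD01 hpX hε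
    hpb hYL2 hm1meas.aestronglyMeasurable hm0meas.aestronglyMeasurable hm1 hm0 hmt1sq hmt0sq
    (hmt1.comp hXm).aestronglyMeasurable (hmt0.comp hXm).aestronglyMeasurable

/-- **Closed form of the variance-difference expansion for misspecified outcome regressions.**
With `Ψ₁` the correct doubly robust score and `Ψ₃` the score using the true propensity score
`p(X)` but misspecified outcome regressions `m̃₁, m̃₀`,
`E[Ψ₃²|X] - E[Ψ₁²|X] = ((1-p(X))/p(X))·(m̃₁(X)-m₁(X))²
  + (p(X)/(1-p(X)))·(m̃₀(X)-m₀(X))² + 2(m̃₁(X)-m₁(X))(m̃₀(X)-m₀(X))`. -/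
theorem variance_difference_closed_form
    {Ω E : Type*} [MeasurableSpace Ω] [StandardBorelSpace Ω] [Nonempty Ω]
    [mE : MeasurableSpace E]
    (μ : Measure Ω) [IsProbabilityMeasure μ]
    (X : Ω → E) (hX : Measurable X)
    (D Y1 Y0 Y : Ω → ℝ)
    (hD : Measurable D) (hD01 : ∀ ω, D ω = 0 ∨ D ω = 1)
    (hY1m : Measurable Y1) (hY0m : Measurable Y0)
    (hY1 : MemLp Y1 2 μ) (hY0 : MemLp Y0 2 μ)
    (hY : ∀ ω, Y ω = D ω * Y1 ω + (1 - D ω) * Y0 ω)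
    (hUnconf : CondIndepFun (MeasurableSpace.comap X mE) hX.comap_le
      (fun ω => (Y1 ω, Y0 ω)) D μ)
    (pX : Ω → ℝ)
    (hpX : pX =ᵐ[μ] μ[D | MeasurableSpace.comap X mE])
    (ε : ℝ) (hε : 0 < ε) (hpb : ∀ ω, ε ≤ pX ω ∧ pX ω ≤ 1 - ε)
    (m1 m0 : Ω → ℝ)
    (hm1meas : StronglyMeasurable[MeasurableSpace.comap X mE] m1)
    (hm0meas : StronglyMeasurable[MeasurableSpace.comap X mE] m0)
    (hm1 : μ[fun ω => D ω * Y ω | MeasurableSpace.comap X mE]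
      =ᵐ[μ] fun ω => pX ω * m1 ω)
    (hm0 : μ[fun ω => (1 - D ω) * Y ω | MeasurableSpace.comap X mE]
      =ᵐ[μ] fun ω => (1 - pX ω) * m0 ω)
    (mtilde1 mtilde0 : E → ℝ)
    (hmt1 : Measurable mtilde1) (hmt0 : Measurable mtilde0)
    (hmt1sq : MemLp (fun ω => mtilde1 (X ω)) 2 μ)
    (hmt0sq : MemLp (fun ω => mtilde0 (X ω)) 2 μ) :
    (fun ω =>
        (μ[fun ω' => (D ω' * (Y ω' - mtilde1 (X ω')) / pX ω'
              - (1 - D ω') * (Y ω' - mtilde0 (X ω')) / (1 - pX ω')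
              + mtilde1 (X ω') - mtilde0 (X ω')) ^ 2 | MeasurableSpace.comap X mE]) ω
        - (μ[fun ω' => (D ω' * (Y ω' - m1 ω') / pX ω'
              - (1 - D ω') * (Y ω' - m0 ω') / (1 - pX ω')
              + m1 ω' - m0 ω') ^ 2 | MeasurableSpace.comap X mE]) ω)
      =ᵐ[μ] fun ω =>
        ((1 - pX ω) / pX ω) * (mtilde1 (X ω) - m1 ω) ^ 2
          + (pX ω / (1 - pX ω)) * (mtilde0 (X ω) - m0 ω) ^ 2
          + 2 * (mtilde1 (X ω) - m1 ω) * (mtilde0 (X ω) - m0 ω) :=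
  variance_difference_closed_form_general (mE := mE) μ X hX D Y1 Y0 Y hD hD01 hY1 hY0 hY pX hpX ε hε
    hpb m1 m0 hm1meas hm0meas hm1 hm0 mtilde1 mtilde0 hmt1 hmt0 hmt1sq hmt0sq
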